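/- arXiv:2008.09936 — 6 statements merged into one kernel-verified Lean document; each statement's English description precedes it below -/
import Mathlib

section
/- Let f : ℝ → ℝ be lower semi-continuous and let f^c denote its convex hull (the largest convex function below f). If f > f^c on an open interval (a,b), then f^c is linear (affine) on (a,b). -/
open MeasureTheory Set Filter

noncomputable def pot (eta : Measure ℝ) (k : ℝ) : ℝ := ∫ x, max (k - x) 0 ∂eta

noncomputable def cpot (eta : Measure ℝ) (k : ℝ) : ℝ := ∫ x, max (x - k) 0 ∂eta

/-- `c` is the convex hull (largest convex minorant) of `f`. -/
def IsConvexHull (f c : ℝ → ℝ) : Prop :=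
  ConvexOn ℝ Set.univ c ∧ (∀ x, c x ≤ f x) ∧
    ∀ g : ℝ → ℝ, ConvexOn ℝ Set.univ g → (∀ x, g x ≤ f x) → ∀ x, g x ≤ c x

/-- Convex order: `∫ f dη ≤ ∫ f dχ` for all convex `f` for which both integrals exist. -/
def Cx (eta chi : Measure ℝ) : Prop :=
  ∀ f : ℝ → ℝ, ConvexOn ℝ Set.univ f → Integrable f eta → Integrable f chi →
    ∫ x, f x ∂eta ≤ ∫ x, f x ∂chi

/-- Extended convex order: `∫ f dη ≤ ∫ f dχ` for all nonnegative convex `f`. -/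
def ECx (eta chi : Measure ℝ) : Prop :=
  ∀ f : ℝ → ℝ, ConvexOn ℝ Set.univ f → (∀ x, 0 ≤ f x) →
    ∫⁻ x, ENNReal.ofReal (f x) ∂eta ≤ ∫⁻ x, ENNReal.ofReal (f x) ∂chi

/-- The class `𝒟(a, b)`: nonnegative, nondecreasing, convex functions vanishing at `-∞`
and asymptotic to `a * z - b` at `+∞`. -/
def MemD (a b : ℝ) (f : ℝ → ℝ) : Prop :=
  ConvexOn ℝ Set.univ f ∧ Monotone f ∧ (∀ x, 0 ≤ f x) ∧
    Tendsto f atBot (nhds 0) ∧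
    Tendsto (fun z => f z - (a * z - b)) atTop (nhds 0)

/-- `S` is the shadow of `μ` in `ν`. -/
def IsShadow (mu nu S : Measure ℝ) : Prop :=
  Cx mu S ∧ S ≤ nu ∧ ∀ eta : Measure ℝ, Cx mu eta → eta ≤ nu → Cx S eta

/-- `T` is the counter-shadow of `μ` in `ν`. -/
def IsCounterShadow (mu nu T : Measure ℝ) : Prop :=
  Cx mu T ∧ T ≤ nu ∧ ∀ eta : Measure ℝ, Cx mu eta → eta ≤ nu → Cx eta T

/-!
If `c` were not affine on a compact `[u, v] ⊆ (a, b)`, the chord `ℓ` of `c` over `[u, v]` would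
exceed `c` on `[u, v]`, with maximal excess `M > 0`, while `ℓ ≤ c` outside `[u, v]` by convexity.
By lower semicontinuity `f - c ≥ ε > 0` on `[u, v]`, so `ℓ - M + min ε M` is an affine, hence
convex, minorant of `f` that exceeds `c` where the maximum `M` is attained, contradicting
maximality of the hull. Affine pieces on overlapping compact intervals then glue.
-/

section Secant

variable {𝕜 : Type*} [Field 𝕜] [LinearOrder 𝕜] [IsStrictOrderedRing 𝕜] {s : Set 𝕜} {g : 𝕜 → 𝕜}
  {u v x : 𝕜}

theorem ConvexOn.le_slope_mul_add (hg : ConvexOn 𝕜 s g) (hu : u ∈ s) (hv : v ∈ s)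
    (hx : x ∈ Icc u v) : g x ≤ slope g u v * (x - u) + g u := by
  rcases hx.1.eq_or_lt with rfl | hux
  · simp
  have hsec := hg.secant_mono hu (hg.1.ordConnected.out hu hv hx) hv hux.ne'
    (hux.trans_le hx.2).ne' hx.2
  rw [div_le_iff₀ (sub_pos.2 hux)] at hsec
  rw [slope_def_field]
  linarith

theorem ConvexOn.slope_mul_add_le (hg : ConvexOn 𝕜 s g) (hu : u ∈ s) (hv : v ∈ s) (hx : x ∈ s)
    (huv : u < v) (hx' : x ∉ Ioo u v) : slope g u v * (x - u) + g u ≤ g x := by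
  rw [slope_def_field]
  rcases lt_trichotomy x u with hxu | rfl | hux
  · have hsec := hg.secant_mono hu hx hv hxu.ne huv.ne' (hxu.trans huv).le
    rw [div_le_iff_of_neg (sub_neg.2 hxu)] at hsec
    linarith
  · simp
  · have hvx : v ≤ x := not_lt.1 fun hxv => hx' ⟨hux, hxv⟩
    have hsec := hg.secant_mono hu hv hx huv.ne' hux.ne' hvx
    rw [le_div_iff₀ (sub_pos.2 hux)] at hsec
    linarith

end Secant

theorem convexOn_affine (m k : ℝ) : ConvexOn ℝ univ fun x => m * x + k :=
  ((LinearMap.mul ℝ ℝ m).convexOn convex_univ).add_const k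

namespace IsConvexHull

variable {f c : ℝ → ℝ}

theorem affine_le_of_isCompact (hf : LowerSemicontinuous f) (hc : IsConvexHull f c)
    {K : Set ℝ} (hK : IsCompact K) (hlt : ∀ x ∈ K, c x < f x) {m k : ℝ}
    (hout : ∀ x ∉ K, m * x + k ≤ c x) (x : ℝ) : m * x + k ≤ c x := by
  obtain ⟨hconv, hcf, hmax⟩ := hc
  by_contra! hx
  have hxK : x ∈ K := by_contra fun h => (hout x h).not_gt hx
  have hcont : Continuous c := hconv.locallyLipschitz.continuous
  have hgap : LowerSemicontinuous fun y => f y - c y := by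
    simpa [sub_eq_add_neg] using hf.add hcont.neg.lowerSemicontinuous
  obtain ⟨w, hwK, hw⟩ := hK.exists_isMaxOn (f := fun y => m * y + k - c y) ⟨x, hxK⟩
    (by fun_prop)
  obtain ⟨z, hzK, hz⟩ := (hgap.lowerSemicontinuousOn K).exists_isMinOn ⟨x, hxK⟩ hK
  set M := m * w + k - c w
  set ε := f z - c z
  have hM : 0 < M := by
    have : m * x + k - c x ≤ M := hw hxK
    linarith
  have hε : 0 < ε := sub_pos.2 (hlt z hzK)
  set δ := min ε M
  have hle : ∀ y, m * y + (k - M + δ) ≤ f y := by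
    intro y
    by_cases hy : y ∈ K
    · have h1 : m * y + k - c y ≤ M := hw hy
      have h2 : ε ≤ f y - c y := hz hy
      linarith [min_le_left ε M]
    · linarith [hout y hy, hcf y, min_le_right ε M]
  have := hmax _ (convexOn_affine m (k - M + δ)) hle w
  linarith [lt_min hε hM]

theorem exists_affine_on_Icc (hf : LowerSemicontinuous f) (hc : IsConvexHull f c) {u v : ℝ}
    (huv : u < v) (hlt : ∀ x ∈ Icc u v, c x < f x) :
    ∃ m k : ℝ, ∀ x ∈ Icc u v, c x = m * x + k := by
  refine ⟨slope c u v, c u - slope c u v * u, fun x hx => le_antisymm ?_ ?_⟩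
  · linarith [hc.1.le_slope_mul_add (mem_univ u) (mem_univ v) hx]
  · refine hc.affine_le_of_isCompact hf isCompact_Icc hlt (fun y hy => ?_) x
    have := hc.1.slope_mul_add_le (mem_univ u) (mem_univ v) (mem_univ y) huv
      (fun hy' => hy (Ioo_subset_Icc_self hy'))
    linarith

end IsConvexHull

theorem slope_eq_of_eq_affine {g : ℝ → ℝ} {s : Set ℝ} {m k : ℝ}
    (hg : ∀ x ∈ s, g x = m * x + k) {x y : ℝ} (hx : x ∈ s) (hy : y ∈ s) (hxy : x ≠ y) :
    slope g x y = m := by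
  rw [slope_def_field, hg x hx, hg y hy]
  field_simp [sub_ne_zero.2 hxy.symm]
  ring

theorem stmt0 (f c : ℝ → ℝ) (hf : LowerSemicontinuous f)
    (hc : IsConvexHull f c) (a b : ℝ)
    (hgt : ∀ x ∈ Ioo a b, c x < f x) :
    ∃ m q : ℝ, ∀ x ∈ Ioo a b, c x = m * x + q := by
  rcases (Ioo a b).eq_empty_or_nonempty with hempty | ⟨p, hap, hpb⟩
  · exact ⟨0, 0, by simp [hempty]⟩
  obtain ⟨r, hpr, hrb⟩ := exists_between hpb
  refine ⟨slope c p r, c p - slope c p r * p, fun x hx => ?_⟩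
  have hsub : Icc (min p x) (max r x) ⊆ Ioo a b :=
    fun y hy => ⟨(lt_min hap hx.1).trans_le hy.1, hy.2.trans_lt (max_lt hrb hx.2)⟩
  obtain ⟨m, k, hmk⟩ := hc.exists_affine_on_Icc hf
    ((min_le_left p x).trans_lt (hpr.trans_le (le_max_left r x))) fun y hy => hgt y (hsub hy)
  have hp : p ∈ Icc (min p x) (max r x) := ⟨min_le_left p x, hpr.le.trans (le_max_left r x)⟩
  have hr : r ∈ Icc (min p x) (max r x) := ⟨(min_le_left p x).trans hpr.le, le_max_left r x⟩
  rw [slope_eq_of_eq_affine hmk hp hr hpr.ne, hmk x ⟨min_le_right p x, le_max_right r x⟩,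
    hmk p hp]
  ring
end

section
/- Let f, g : ℝ → ℝ be convex functions. Then the function ψ = g - (g - f)^c is convex, where (g-f)^c denotes the convex hull of g - f. -/
open MeasureTheory Set Filter

/-! A continuous function on `ℝ` satisfying the midpoint inequality at all small scales around
every point is convex: otherwise the largest maximiser of the function minus a chord would
violate it. `ψ = g - c` has this property. Where `c` touches `g - f`, `ψ = f` there while
`ψ ≥ f` everywhere, so the convex `f` supports `ψ` from below. Where `c < g - f`, a chord of `c`
over a short interval around the point stays below `g - f`, hence below `c`; so `c` is
midpoint-affine there and `ψ` inherits the midpoint inequality from `g`. -/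

open Topology

theorem ConvexOn.continuous_of_univ {E : Type*} [NormedAddCommGroup E] [NormedSpace ℝ E]
    [FiniteDimensional ℝ E] {f : E → ℝ} (hf : ConvexOn ℝ univ f) : Continuous f :=
  continuousOn_univ.1 (hf.continuousOn isOpen_univ)

theorem convexOn_univ_affine (k m : ℝ) : ConvexOn ℝ univ fun x : ℝ => k + m * x :=
  ⟨convex_univ, fun _ _ _ _ _ _ _ _ hab => le_of_eq <| by
    simp only [smul_eq_mul]; linear_combination (-k) * hab⟩

theorem ConvexOn.two_mul_le_add {f : ℝ → ℝ} (hf : ConvexOn ℝ univ f) (t s : ℝ) :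
    2 * f t ≤ f (t - s) + f (t + s) := by
  have h := hf.2 (mem_univ (t - s)) (mem_univ (t + s)) (by norm_num : (0 : ℝ) ≤ 1 / 2)
    (by norm_num : (0 : ℝ) ≤ 1 / 2) (by norm_num)
  have hmid : (1 / 2 : ℝ) • (t - s) + (1 / 2 : ℝ) • (t + s) = t := by
    simp only [smul_eq_mul]; ring
  rw [hmid, smul_eq_mul, smul_eq_mul] at h
  linarith

theorem ConvexOn.secant_le_of_notMem_Ioo {f : ℝ → ℝ} (hf : ConvexOn ℝ univ f) {u v t : ℝ}
    (huv : u < v) (ht : t ∉ Ioo u v) :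
    f u + (f v - f u) / (v - u) * (t - u) ≤ f t := by
  rcases lt_trichotomy t u with htu | rfl | hut
  · have hslope := hf.secant_mono (mem_univ u) (mem_univ t) (mem_univ v) htu.ne huv.ne'
      (htu.trans huv).le
    have := mul_le_mul_of_nonpos_right hslope (sub_nonpos.2 htu.le)
    rw [div_mul_cancel₀ _ (sub_ne_zero.2 htu.ne)] at this
    linarith
  · simp
  · have hvt : v ≤ t := not_lt.1 fun htv => ht ⟨hut, htv⟩
    have hslope := hf.secant_mono (mem_univ u) (mem_univ v) (mem_univ t) huv.ne' hut.ne' hvt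
    have := mul_le_mul_of_nonneg_right hslope (sub_nonneg.2 hut.le)
    rw [div_mul_cancel₀ _ (sub_ne_zero.2 hut.ne')] at this
    linarith

theorem IsConvexHull.eventually_add_le_two_mul {h c : ℝ → ℝ} {r : ℝ} (hc : IsConvexHull h c)
    (hh : LowerSemicontinuousAt h r) (hr : c r < h r) :
    ∀ᶠ s in 𝓝[>] (0 : ℝ), c (r - s) + c (r + s) ≤ 2 * c r := by
  obtain ⟨hconv, hle, hmax⟩ := hc
  obtain ⟨y, hcy, hyh⟩ := exists_between hr
  have hcont : ContinuousAt c r := hconv.continuous_of_univ.continuousAt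
  obtain ⟨ε, hε, hball⟩ := Metric.eventually_nhds_iff.1
    ((hcont.eventually (gt_mem_nhds hcy)).and (hh y hyh))
  filter_upwards [Ioo_mem_nhdsGT hε] with s ⟨hs, hsε⟩
  set u := r - s
  set v := r + s
  have huv : u < v := by linarith
  have hnear : ∀ t ∈ Icc u v, c t < y ∧ y < h t := fun t ht =>
    hball (by rw [Real.dist_eq, abs_lt]; constructor <;> linarith [ht.1, ht.2])
  set m := (c v - c u) / (v - u)
  set ℓ : ℝ → ℝ := fun t => (c u - m * u) + m * t
  have hℓ : ∀ t, ℓ t = c u + m * (t - u) := fun t => by ring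
  have hℓconv : ConvexOn ℝ univ ℓ := convexOn_univ_affine _ _
  have hm : m * (v - u) = c v - c u := div_mul_cancel₀ _ (sub_ne_zero.2 huv.ne')
  have hℓh : ∀ t, ℓ t ≤ h t := by
    intro t
    by_cases ht : t ∈ Ioo u v
    · calc ℓ t ≤ max (ℓ u) (ℓ v) := hℓconv.le_on_segment (mem_univ _) (mem_univ _)
            (by rw [segment_eq_Icc huv.le]; exact Ioo_subset_Icc_self ht)
        _ = max (c u) (c v) := by
          rw [hℓ, hℓ, sub_self, mul_zero, add_zero, hm, add_sub_cancel]
        _ ≤ y := max_le (hnear u ⟨le_rfl, huv.le⟩).1.le (hnear v ⟨huv.le, le_rfl⟩).1.le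
        _ ≤ h t := (hnear t (Ioo_subset_Icc_self ht)).2.le
    · exact ((hℓ t).trans_le (hconv.secant_le_of_notMem_Ioo huv ht)).trans (hle t)
  have hℓc : ℓ r ≤ c r := (le_max_right _ _).trans
    (hmax (fun t => max (c t) (ℓ t)) (hconv.sup hℓconv) (fun t => max_le (hle t) (hℓh t)) r)
  have hℓr : ℓ r = (c u + c v) / 2 := by
    have hru : r - u = (v - u) / 2 := by simp only [u, v]; ring
    rw [hℓ, hru]
    linear_combination hm / 2
  linarith

def IsLocallyMidpointConvexAt (ψ : ℝ → ℝ) (t : ℝ) : Prop :=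
  ∀ᶠ s in 𝓝[>] (0 : ℝ), 2 * ψ t ≤ ψ (t - s) + ψ (t + s)

theorem IsLocallyMidpointConvexAt.of_convexOn_le {f ψ : ℝ → ℝ} {t : ℝ} (hf : ConvexOn ℝ univ f)
    (hle : ∀ x, f x ≤ ψ x) (heq : f t = ψ t) : IsLocallyMidpointConvexAt ψ t :=
  Eventually.of_forall fun s => by linarith [hf.two_mul_le_add t s, hle (t - s), hle (t + s)]

theorem IsLocallyMidpointConvexAt.sub_affine {ψ : ℝ → ℝ} {t : ℝ}
    (hψ : IsLocallyMidpointConvexAt ψ t) (k m : ℝ) :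
    IsLocallyMidpointConvexAt (fun x => ψ x - (k + m * x)) t :=
  hψ.mono fun _ hs => by linear_combination hs

theorem nonpos_on_Icc_of_isLocallyMidpointConvexAt {φ : ℝ → ℝ} {x y : ℝ}
    (hφ : ContinuousOn φ (Icc x y)) (hx : φ x ≤ 0) (hy : φ y ≤ 0)
    (hloc : ∀ t ∈ Ioo x y, IsLocallyMidpointConvexAt φ t) : ∀ t ∈ Icc x y, φ t ≤ 0 := by
  by_contra! ⟨t₀, ht₀, hpos⟩
  obtain ⟨t, ht, htmax⟩ := isCompact_Icc.exists_isMaxOn ⟨t₀, ht₀⟩ hφ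
  have hM : 0 < φ t := hpos.trans_le (htmax ht₀)
  -- the largest maximiser cannot satisfy the midpoint inequality, the right neighbour being lower
  have hS : IsCompact (Icc x y ∩ φ ⁻¹' {φ t}) := isCompact_Icc.of_isClosed_subset
    (hφ.preimage_isClosed_of_isClosed isClosed_Icc isClosed_singleton) inter_subset_left
  obtain ⟨t₁, ⟨ht₁, hφt₁ : φ t₁ = φ t⟩, ht₁max⟩ := hS.exists_isGreatest ⟨t, ht, rfl⟩
  have hxt₁ : x < t₁ := ht₁.1.lt_of_ne fun h => by rw [← h] at hφt₁; linarith
  have ht₁y : t₁ < y := ht₁.2.lt_of_ne fun h => by rw [h] at hφt₁; linarith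
  obtain ⟨s, hmid, hs, hsmin⟩ := ((hloc t₁ ⟨hxt₁, ht₁y⟩).and
    (Ioo_mem_nhdsGT (lt_min (sub_pos.2 hxt₁) (sub_pos.2 ht₁y)))).exists
  obtain ⟨hsx, hsy⟩ := lt_min_iff.1 hsmin
  have hleft : φ (t₁ - s) ≤ φ t := htmax ⟨by linarith, by linarith⟩
  have hright : φ (t₁ + s) < φ t := by
    have hmem : t₁ + s ∈ Icc x y := ⟨by linarith, by linarith⟩
    refine (htmax hmem).lt_of_ne fun heq => ?_
    linarith [ht₁max ⟨hmem, heq⟩]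
  linarith

theorem convexOn_univ_of_isLocallyMidpointConvexAt {ψ : ℝ → ℝ} (hψ : Continuous ψ)
    (hloc : ∀ t, IsLocallyMidpointConvexAt ψ t) : ConvexOn ℝ univ ψ := by
  refine LinearOrder.convexOn_of_lt convex_univ fun x _ y _ hxy a b ha hb hab => ?_
  have hyx : y - x ≠ 0 := sub_ne_zero.2 hxy.ne'
  set m := (ψ y - ψ x) / (y - x)
  set k := ψ x - m * x
  have hmem : a • x + b • y ∈ Icc x y := segment_eq_Icc hxy.le ▸ ⟨a, b, ha.le, hb.le, hab, rfl⟩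
  have hchord := nonpos_on_Icc_of_isLocallyMidpointConvexAt (φ := fun t => ψ t - (k + m * t))
    (by fun_prop) (le_of_eq (by ring)) (le_of_eq (by simp only [k, m]; field_simp; ring))
    (fun t _ => (hloc t).sub_affine k m) _ hmem
  have hline : k + m * (a • x + b • y) = a • ψ x + b • ψ y := by
    have hm : m * (y - x) = ψ y - ψ x := div_mul_cancel₀ _ hyx
    simp only [smul_eq_mul, k]
    linear_combination b * hm + (m * x - ψ x) * hab
  linarith

theorem stmt1 (f g c : ℝ → ℝ)
    (hf : ConvexOn ℝ Set.univ f) (hg : ConvexOn ℝ Set.univ g)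
    (hc : IsConvexHull (fun x => g x - f x) c) :
    ConvexOn ℝ Set.univ (fun x => g x - c x) := by
  have hle : ∀ x, c x ≤ g x - f x := hc.2.1
  refine convexOn_univ_of_isLocallyMidpointConvexAt
    (hg.continuous_of_univ.sub hc.1.continuous_of_univ) fun t => ?_
  rcases (hle t).lt_or_eq with hlt | heq
  · have hlsc :=
      (hg.continuous_of_univ.sub hf.continuous_of_univ).continuousAt.lowerSemicontinuousAt (x := t)
    exact (hc.eventually_add_le_two_mul hlsc hlt).mono fun s hs => by
      linarith [hg.two_mul_le_add t s]
  · exact .of_convexOn_le hf (fun x => by linarith [hle x]) (by linarith)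
end

section
/- Let f : ℝ → ℝ be any function and g : ℝ → ℝ a convex function. Then the convex hull of f - g equals the convex hull of f^c - g, i.e., (f - g)^c = (f^c - g)^c. -/
open MeasureTheory Set Filter

theorem stmt2 (f g fc h1 h2 : ℝ → ℝ)
    (hg : ConvexOn ℝ Set.univ g)
    (hfc : IsConvexHull f fc)
    (hh1 : IsConvexHull (fun x => f x - g x) h1)
    (hh2 : IsConvexHull (fun x => fc x - g x) h2) :
    h1 = h2 := by
  funext x
  apply le_antisymm
  · -- h1 ≤ h2 : h1 + g is convex and ≤ f, so ≤ fc, so h1 ≤ fc - g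
    have hconv : ConvexOn ℝ Set.univ (fun x => h1 x + g x) := hh1.1.add hg
    have hle : ∀ x, h1 x + g x ≤ f x := fun x => by
      have := hh1.2.1 x; simp only at this; linarith
    have hfc' : ∀ x, h1 x + g x ≤ fc x := hfc.2.2 _ hconv hle
    exact hh2.2.2 h1 hh1.1 (fun x => by have := hfc' x; simp only; linarith) x
  · -- h2 ≤ h1 since fc - g ≤ f - g
    exact hh1.2.2 h2 hh2.1 (fun x => by have h := hh2.2.1 x; simp only at h ⊢; have := hfc.2.1 x; linarith) x
end

section
/- For finite measures η, χ on ℝ with finite first moments, η ≤ χ (setwise, i.e., η(A) ≤ χ(A) for all Borel A) if and only if P_χ - P_η is convex, where P_η(k) = ∫(k-x)^+ η(dx). -/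
open MeasureTheory Set Filter

open scoped Topology

/-!
The right derivative of `pot μ` at `k` is `μ (Iic k)`, so `pot χ - pot η` is convex exactly when
`k ↦ χ (Iic k) - η (Iic k)` is nondecreasing. That function is then right-continuous and vanishes
at `-∞`, so it is the distribution function of a measure `ν` with `χ = η + ν`. Conversely, if
`η ≤ χ` then `pot χ - pot η = pot (χ - η)`, which is convex as an integral of the convex hinges
`k ↦ (k - x)⁺`.
-/

theorem ConvexOn.integral_of_forall {α E : Type*} [MeasurableSpace α] [AddCommMonoid E]
    [Module ℝ E] {μ : Measure α} {s : Set E} {f : E → α → ℝ} (hs : Convex ℝ s)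
    (hf : ∀ x, ConvexOn ℝ s (f · x)) (hfi : ∀ k ∈ s, Integrable (f k) μ) :
    ConvexOn ℝ s (fun k => ∫ x, f k x ∂μ) := by
  refine ⟨hs, fun a ha b hb wa wb hwa hwb hw => ?_⟩
  calc ∫ x, f (wa • a + wb • b) x ∂μ
      ≤ ∫ x, (wa * f a x + wb * f b x) ∂μ :=
        integral_mono (hfi _ (hs ha hb hwa hwb hw))
          (((hfi a ha).const_mul wa).add ((hfi b hb).const_mul wb))
          fun x => (hf x).2 ha hb hwa hwb hw
    _ = wa * ∫ x, f a x ∂μ + wb * ∫ x, f b x ∂μ := by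
        rw [integral_add ((hfi a ha).const_mul wa) ((hfi b hb).const_mul wb),
          integral_const_mul, integral_const_mul]

lemma ConvexOn.monotone_of_hasDerivWithinAt_Ioi {f f' : ℝ → ℝ} (hf : ConvexOn ℝ univ f)
    (hf' : ∀ x, HasDerivWithinAt f (f' x) (Ioi x) x) : Monotone f' := by
  intro a b hab
  have h : derivWithin f (Ioi a) a ≤ derivWithin f (Ioi b) b :=
    hf.monotoneOn_rightDeriv (by simp) (by simp) hab
  rwa [(hf' a).derivWithin (uniqueDiffWithinAt_Ioi a),
    (hf' b).derivWithin (uniqueDiffWithinAt_Ioi b)] at h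

section Iic

variable {μ : Measure ℝ} [IsFiniteMeasure μ]

lemma tendsto_measureReal_Iic_atBot : Tendsto (fun x => μ.real (Iic x)) atBot (𝓝 0) := by
  have hempty : ⋂ x : ℝ, Iic x = ∅ :=
    iInter_Iic_eq_empty_iff.2 (by simpa only [range_id'] using not_bddBelow_univ)
  have h := tendsto_measure_iInter_atBot (μ := μ) (fun x => measurableSet_Iic.nullMeasurableSet)
    monotone_Iic ⟨0, measure_ne_top μ _⟩
  rw [hempty, measure_empty] at h
  exact (ENNReal.tendsto_toReal ENNReal.zero_ne_top).comp h

lemma continuousWithinAt_measureReal_Iic (a : ℝ) :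
    ContinuousWithinAt (fun x => μ.real (Iic x)) (Ici a) a := by
  have hinter : ⋂ r > a, Iic r = Iic a := by
    ext x
    simp only [mem_iInter, mem_Iic, gt_iff_lt]
    exact forall_gt_imp_ge_iff_le_of_dense
  have h := tendsto_measure_biInter_gt (μ := μ) (fun r _ => measurableSet_Iic.nullMeasurableSet)
    (fun _ _ _ hij => Iic_subset_Iic.2 hij) ⟨a + 1, by linarith, measure_ne_top μ _⟩
  rw [hinter] at h
  rw [← continuousWithinAt_Ioi_iff_Ici]
  exact (ENNReal.tendsto_toReal (measure_ne_top μ _)).comp h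

end Iic

theorem Measure.le_of_monotone_measureReal_Iic_sub {η χ : Measure ℝ} [IsFiniteMeasure η]
    [IsFiniteMeasure χ] (h : Monotone fun x => χ.real (Iic x) - η.real (Iic x)) : η ≤ χ := by
  let G : StieltjesFunction ℝ := ⟨_, h, fun a =>
    (continuousWithinAt_measureReal_Iic a).sub (continuousWithinAt_measureReal_Iic a)⟩
  have hG_atBot : Tendsto G atBot (𝓝 0) := by
    simpa using tendsto_measureReal_Iic_atBot.sub tendsto_measureReal_Iic_atBot
  have hG_nonneg : ∀ x, 0 ≤ G x := fun x =>
    le_of_tendsto hG_atBot (eventually_atBot.2 ⟨x, fun y hy => G.mono hy⟩)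
  suffices χ = η + G.measure from this ▸ Measure.le_add_right le_rfl
  refine Measure.ext_of_Iic _ _ fun a => ?_
  rw [Measure.add_apply, G.measure_Iic hG_atBot, sub_zero, ← ofReal_measureReal,
    ← ofReal_measureReal, ← ENNReal.ofReal_add measureReal_nonneg (hG_nonneg a)]
  congr 1
  show _ = _ + (χ.real _ - η.real _)
  ring

lemma abs_slope_max_sub_zero_le_one (x k t : ℝ) : |slope (fun k => max (k - x) 0) k t| ≤ 1 := by
  rw [slope_def_field, abs_div]
  refine div_le_one_of_le₀ ?_ (abs_nonneg _)
  simpa only [sub_sub_sub_cancel_right] using abs_max_sub_max_le_abs (t - x) (k - x) 0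

lemma tendsto_slope_max_sub_zero (x k : ℝ) :
    Tendsto (slope (fun k => max (k - x) 0) k) (𝓝[>] k) (𝓝 ((Iic k).indicator 1 x)) := by
  by_cases hxk : x ≤ k
  · rw [indicator_of_mem (mem_Iic.2 hxk)]
    refine tendsto_const_nhds.congr' ?_
    filter_upwards [self_mem_nhdsWithin] with t (ht : k < t)
    rw [slope_def_field, max_eq_left (by linarith), max_eq_left (by linarith),
      sub_sub_sub_cancel_right, div_self (sub_ne_zero.2 ht.ne'), Pi.one_apply]
  · rw [indicator_of_notMem (mt mem_Iic.1 hxk)]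
    refine tendsto_const_nhds.congr' ?_
    filter_upwards [Ioo_mem_nhdsGT (not_le.1 hxk)] with t ht
    rw [slope_def_field, max_eq_right (by linarith [ht.2]), max_eq_right (by linarith),
      sub_self, zero_div]

section Potential

variable {μ : Measure ℝ} [IsFiniteMeasure μ]

lemma integrable_max_sub_zero (hμ : Integrable (fun x => x) μ) (k : ℝ) :
    Integrable (fun x => max (k - x) 0) μ :=
  ((integrable_const k).sub hμ).pos_part

lemma pot_add_measure {ν : Measure ℝ} [IsFiniteMeasure ν] (hμ : Integrable (fun x => x) μ)
    (hν : Integrable (fun x => x) ν) (k : ℝ) : pot (μ + ν) k = pot μ k + pot ν k :=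
  integral_add_measure (integrable_max_sub_zero hμ k) (integrable_max_sub_zero hν k)

lemma convexOn_pot (hμ : Integrable (fun x => x) μ) : ConvexOn ℝ univ (pot μ) :=
  ConvexOn.integral_of_forall convex_univ
    (fun x => ((convexOn_id convex_univ).sub (concaveOn_const x convex_univ)).sup
      (convexOn_const 0 convex_univ))
    fun k _ => integrable_max_sub_zero hμ k

lemma hasDerivWithinAt_pot (hμ : Integrable (fun x => x) μ) (k : ℝ) :
    HasDerivWithinAt (pot μ) (μ.real (Iic k)) (Ioi k) k := by
  have hslope : slope (pot μ) k = fun t => ∫ x, slope (fun k => max (k - x) 0) k t ∂μ := by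
    ext t
    simp only [slope_def_field, pot]
    rw [integral_div, integral_sub (integrable_max_sub_zero hμ t) (integrable_max_sub_zero hμ k)]
  rw [hasDerivWithinAt_iff_tendsto_slope, sdiff_singleton_eq_self self_notMem_Ioi, hslope,
    ← integral_indicator_one measurableSet_Iic]
  refine tendsto_integral_filter_of_dominated_convergence (fun _ => 1) ?_ ?_
    (integrable_const 1) (ae_of_all _ fun x => tendsto_slope_max_sub_zero x k)
  · refine Eventually.of_forall fun t => Measurable.aestronglyMeasurable ?_
    simp only [slope_def_field]
    fun_prop
  · exact Eventually.of_forall fun t => ae_of_all _ fun x => abs_slope_max_sub_zero_le_one x k t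

end Potential

theorem stmt6 (eta chi : Measure ℝ) [IsFiniteMeasure eta] [IsFiniteMeasure chi]
    (hinte : Integrable (fun x => x) eta) (hintc : Integrable (fun x => x) chi) :
    eta ≤ chi ↔ ConvexOn ℝ Set.univ (fun k => pot chi k - pot eta k) := by
  constructor
  · intro hle
    have hint : Integrable (fun x => x) (chi - eta) := hintc.mono_measure Measure.sub_le
    have hdiff : (fun k => pot chi k - pot eta k) = pot (chi - eta) := by
      ext k
      have h := pot_add_measure hint hinte k
      rw [Measure.sub_add_cancel_of_le hle] at h
      linarith
    exact hdiff ▸ convexOn_pot hint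
  · intro hconv
    exact Measure.le_of_monotone_measureReal_Iic_sub <| hconv.monotone_of_hasDerivWithinAt_Ioi
      fun k => (hasDerivWithinAt_pot hintc k).sub (hasDerivWithinAt_pot hinte k)
end

section
/- For finite measures η, χ on ℝ with finite first moments having equal total mass and equal first moment, η is smaller than χ in convex order (∫f dη ≤ ∫f dχ for all convex f : ℝ → ℝ) if and only if P_η(k) ≤ P_χ(k) for all k ∈ ℝ. -/
open MeasureTheory Set Filter

/-!
The forward direction tests the convex order on the put payoffs `(k - x)⁺`. Conversely, put–call
parity together with the equal masses and means orders the call prices as well, hence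
`∫ φ dη ≤ ∫ φ dχ` for every affine function plus a nonnegative combination of calls `(x - k)⁺`.
The maximum of the support lines of a convex `f` at increasing points `t₀ < ⋯ < t_N` is of this
form: it telescopes into the first line plus the positive parts of consecutive differences.
Along grids of mesh `1/(n+1)` on `[-n, n]` these maxima converge to `f` pointwise, squeezed
between the support line at `0` and `f`, and dominated convergence concludes.
-/

open Topology

lemma ConvexOn.add_rightDeriv_mul_sub_le {f : ℝ → ℝ} {S : Set ℝ} (hf : ConvexOn ℝ S f)
    {t x : ℝ} (ht : t ∈ interior S) (hx : x ∈ S) :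
    f t + derivWithin f (Ioi t) t * (x - t) ≤ f x := by
  rcases lt_trichotomy x t with hxt | rfl | htx
  · have h := (hf.slope_le_leftDeriv_of_mem_interior hx ht hxt).trans
      (hf.leftDeriv_le_rightDeriv_of_mem_interior ht)
    rw [slope_def_field, div_le_iff₀ (sub_pos.2 hxt)] at h
    linarith
  · simp
  · have h := hf.rightDeriv_le_slope_of_mem_interior ht hx htx
    rw [slope_def_field, le_div_iff₀ (sub_pos.2 htx)] at h
    linarith

section SupportLines

variable {f g : ℝ → ℝ}

def supportLine (f g : ℝ → ℝ) (t x : ℝ) : ℝ := f t + g t * (x - t)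

lemma supportLine_eq_add_mul (t x : ℝ) :
    supportLine f g t x = supportLine f g t 0 + g t * x := by
  unfold supportLine
  ring

lemma monotone_of_supportLine_le (hsupp : ∀ t x, supportLine f g t x ≤ f x) : Monotone g := by
  intro s t hst
  have h1 := hsupp s t
  have h2 := hsupp t s
  unfold supportLine at h1 h2
  rcases hst.eq_or_lt with rfl | hst
  · rfl
  · nlinarith

lemma supportLine_le_of_lt (hsupp : ∀ t x, supportLine f g t x ≤ f x) {s t u x : ℝ}
    (hst : s ≤ t) (htu : t ≤ u) (h : supportLine f g t x < supportLine f g u x) :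
    supportLine f g s x ≤ supportLine f g t x := by
  have hg := monotone_of_supportLine_le hsupp
  have hut := hsupp u t
  have hst' := hsupp s t
  simp only [supportLine] at *
  have htx : t ≤ x := by
    by_contra! hxt
    nlinarith [hg htu]
  nlinarith [mul_le_mul_of_nonneg_right (hg hst) (sub_nonneg.2 htx)]

lemma sub_mul_le_supportLine (hsupp : ∀ t x, supportLine f g t x ≤ f x) {t x δ : ℝ}
    (htx : t ≤ x) (hxδ : x - t ≤ δ) (hδ : δ ≤ 1) :
    f x - (g x - g (x - 1)) * δ ≤ supportLine f g t x := by
  have hg := monotone_of_supportLine_le hsupp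
  have hfx := hsupp x t
  have hgt := hg (show x - 1 ≤ t by linarith)
  simp only [supportLine] at *
  nlinarith [mul_le_mul_of_nonneg_right hgt (sub_nonneg.2 htx),
    mul_le_mul_of_nonneg_left hxδ (sub_nonneg.2 (hg (show x - 1 ≤ x by linarith)))]

end SupportLines

def envelopeSum (ℓ : ℕ → ℝ → ℝ) (N : ℕ) (x : ℝ) : ℝ :=
  ℓ 0 x + ∑ j ∈ Finset.range N, max (ℓ (j + 1) x - ℓ j x) 0

lemma sup'_range_eq_add_sum_max_sub {v : ℕ → ℝ}
    (hv : ∀ j, v j < v (j + 1) → ∀ i ≤ j, v i ≤ v j) (N : ℕ) :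
    (Finset.range (N + 1)).sup' Finset.nonempty_range_add_one v
      = v 0 + ∑ j ∈ Finset.range N, max (v (j + 1) - v j) 0 := by
  induction N with
  | zero => simp
  | succ N ih =>
    rw [Finset.sup'_congr Finset.nonempty_range_add_one Finset.range_add_one (fun _ _ => rfl),
      Finset.sup'_insert (H := Finset.nonempty_range_add_one), Finset.sum_range_succ,
      ← add_assoc, ← ih]
    by_cases hlt : v N < v (N + 1)
    · have hmax : (Finset.range (N + 1)).sup' Finset.nonempty_range_add_one v = v N :=
        le_antisymm (Finset.sup'_le _ _ fun i hi => hv N hlt i (Finset.mem_range_succ_iff.1 hi))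
          (Finset.le_sup' v (Finset.self_mem_range_succ N))
      rw [hmax, max_eq_left (sub_nonneg.2 hlt.le), max_eq_left hlt.le]
      ring
    · have hN := Finset.le_sup' v (Finset.self_mem_range_succ N)
      rw [max_eq_right (by linarith), max_eq_right (by linarith), add_zero]

section Integrals

variable {μ η χ : Measure ℝ}

lemma integrable_affine [IsFiniteMeasure μ] (hμ : Integrable (fun x => x) μ) (a b : ℝ) :
    Integrable (fun x => a + b * x) μ :=
  (integrable_const a).add (hμ.const_mul b)

lemma integral_affine [IsFiniteMeasure μ] (hμ : Integrable (fun x => x) μ) (a b : ℝ) :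
    ∫ x, (a + b * x) ∂μ = a * μ.real univ + b * ∫ x, x ∂μ := by
  rw [integral_add (integrable_const a) (hμ.const_mul b), integral_const, integral_const_mul,
    smul_eq_mul, mul_comm]

lemma integrable_max_const_sub_zero [IsFiniteMeasure μ] (hμ : Integrable (fun x => x) μ)
    (k : ℝ) : Integrable (fun x => max (k - x) 0) μ :=
  ((integrable_const k).sub hμ).pos_part

lemma cpot_eq_integral_sub_add_pot [IsFiniteMeasure μ] (hμ : Integrable (fun x => x) μ) (k : ℝ) :
    cpot μ k = ∫ x, x ∂μ - k * μ.real univ + pot μ k := by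
  have hparity : ∀ x : ℝ, max (x - k) 0 = (-k + 1 * x) + max (k - x) 0 := by
    intro x
    rcases le_total k x with h | h
    · rw [max_eq_left (by linarith), max_eq_right (by linarith)]; ring
    · rw [max_eq_right (by linarith), max_eq_left (by linarith)]; ring
  unfold cpot pot
  simp_rw [hparity]
  rw [integral_add (integrable_affine hμ _ _) (integrable_max_const_sub_zero hμ k),
    integral_affine hμ]
  ring

lemma integral_max_affine_zero_le (hmass : η.real univ = χ.real univ)
    (hcpot : ∀ k, cpot η k ≤ cpot χ k) (a : ℝ) {b : ℝ} (hb : 0 ≤ b) :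
    ∫ x, max (a + b * x) 0 ∂η ≤ ∫ x, max (a + b * x) 0 ∂χ := by
  rcases hb.eq_or_lt with rfl | hb
  · simp [hmass]
  · have h : ∀ x, max (a + b * x) 0 = b * max (x - -a / b) 0 := by
      intro x
      rw [mul_max_of_nonneg _ _ hb.le, mul_zero, mul_sub, mul_div_cancel₀ _ hb.ne']
      ring_nf
    simp_rw [h, integral_const_mul]
    exact mul_le_mul_of_nonneg_left (hcpot _) hb.le

lemma integrable_envelopeSum [IsFiniteMeasure μ] (hμ : Integrable (fun x => x) μ)
    {ℓ : ℕ → ℝ → ℝ} {b : ℕ → ℝ} (hℓ : ∀ j x, ℓ j x = ℓ j 0 + b j * x) (N : ℕ) :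
    Integrable (envelopeSum ℓ N) μ := by
  have haff : ∀ j, Integrable (ℓ j) μ := fun j =>
    (integrable_affine hμ (ℓ j 0) (b j)).congr (ae_of_all _ fun x => (hℓ j x).symm)
  exact (haff 0).add (integrable_finsetSum _ fun j _ => ((haff (j + 1)).sub (haff j)).pos_part)

lemma integral_envelopeSum_le [IsFiniteMeasure η] [IsFiniteMeasure χ]
    (hη : Integrable (fun x => x) η) (hχ : Integrable (fun x => x) χ)
    (hmass : η.real univ = χ.real univ) (hmean : ∫ x, x ∂η = ∫ x, x ∂χ)
    (hcpot : ∀ k, cpot η k ≤ cpot χ k) {ℓ : ℕ → ℝ → ℝ} {b : ℕ → ℝ} (hb : Monotone b)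
    (hℓ : ∀ j x, ℓ j x = ℓ j 0 + b j * x) (N : ℕ) :
    ∫ x, envelopeSum ℓ N x ∂η ≤ ∫ x, envelopeSum ℓ N x ∂χ := by
  have hsplit : ∀ (μ : Measure ℝ) [IsFiniteMeasure μ], Integrable (fun x => x) μ →
      ∫ x, envelopeSum ℓ N x ∂μ = (ℓ 0 0 * μ.real univ + b 0 * ∫ x, x ∂μ)
        + ∑ j ∈ Finset.range N,
          ∫ x, max ((ℓ (j + 1) 0 - ℓ j 0) + (b (j + 1) - b j) * x) 0 ∂μ := by
    intro μ _ hμ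
    have hmax : ∀ j ∈ Finset.range N,
        Integrable (fun x => max ((ℓ (j + 1) 0 - ℓ j 0) + (b (j + 1) - b j) * x) 0) μ :=
      fun j _ => (integrable_affine hμ _ _).pos_part
    rw [← integral_affine hμ, ← integral_finsetSum _ hmax,
      ← integral_add (integrable_affine hμ _ _) (integrable_finsetSum _ hmax)]
    refine integral_congr_ae (ae_of_all _ fun x => ?_)
    simp only [envelopeSum, hℓ 0 x]
    congr 1
    refine Finset.sum_congr rfl fun j _ => ?_
    rw [hℓ (j + 1) x, hℓ j x]
    ring_nf
  rw [hsplit η hη, hsplit χ hχ, hmass, hmean]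
  exact add_le_add le_rfl (Finset.sum_le_sum fun j _ =>
    integral_max_affine_zero_le hmass hcpot _ (sub_nonneg.2 (hb j.le_succ)))

end Integrals

noncomputable def grid (n j : ℕ) : ℝ := j / (n + 1) - n

lemma grid_mono (n : ℕ) : Monotone (grid n) := fun _ _ hij => by
  unfold grid
  gcongr

lemma grid_mul_add_one (n : ℕ) : grid n (n * (n + 1)) = 0 := by
  unfold grid
  push_cast
  field_simp
  ring

lemma exists_grid_near {n : ℕ} {x : ℝ} (hx : |x| ≤ n) :
    ∃ j ≤ 2 * n * (n + 1), grid n j ≤ x ∧ x - grid n j ≤ 1 / (n + 1) := by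
  have hn : (0 : ℝ) < n + 1 := by positivity
  obtain ⟨hx₁, hx₂⟩ := abs_le.1 hx
  set y := (x + n) * (n + 1) with hy
  have hy₀ : 0 ≤ y := by nlinarith
  refine ⟨⌊y⌋₊, Nat.floor_le_of_le ?_, ?_, ?_⟩
  · push_cast
    nlinarith
  · have := Nat.floor_le hy₀
    unfold grid
    rw [sub_le_iff_le_add, div_le_iff₀ hn]
    linarith
  · have := Nat.lt_floor_add_one y
    unfold grid
    rw [show x - (⌊y⌋₊ / (n + 1 : ℝ) - n) = (y - ⌊y⌋₊) / (n + 1) by field_simp; ring]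
    exact div_le_div_of_nonneg_right (by linarith) hn.le

section SupportApprox

variable {f g : ℝ → ℝ}

noncomputable def supportApprox (f g : ℝ → ℝ) (n : ℕ) : ℝ → ℝ :=
  envelopeSum (fun j => supportLine f g (grid n j)) (2 * n * (n + 1))

lemma supportApprox_eq_sup' (hsupp : ∀ t x, supportLine f g t x ≤ f x) (n : ℕ) (x : ℝ) :
    supportApprox f g n x = (Finset.range (2 * n * (n + 1) + 1)).sup'
      Finset.nonempty_range_add_one fun j => supportLine f g (grid n j) x :=
  (sup'_range_eq_add_sum_max_sub (fun j hlt _ hi => supportLine_le_of_lt hsupp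
    (grid_mono n hi) (grid_mono n j.le_succ) hlt) _).symm

lemma supportApprox_le (hsupp : ∀ t x, supportLine f g t x ≤ f x) (n : ℕ) (x : ℝ) :
    supportApprox f g n x ≤ f x := by
  rw [supportApprox_eq_sup' hsupp]
  exact Finset.sup'_le _ _ fun j _ => hsupp _ x

lemma supportLine_le_supportApprox (hsupp : ∀ t x, supportLine f g t x ≤ f x) {n j : ℕ}
    (hj : j ≤ 2 * n * (n + 1)) (x : ℝ) :
    supportLine f g (grid n j) x ≤ supportApprox f g n x := by
  rw [supportApprox_eq_sup' hsupp]
  exact Finset.le_sup' (fun j => supportLine f g (grid n j) x) (Finset.mem_range_succ_iff.2 hj)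

lemma abs_supportApprox_le (hsupp : ∀ t x, supportLine f g t x ≤ f x) (n : ℕ) (x : ℝ) :
    |supportApprox f g n x| ≤ |f x| + |supportLine f g 0 x| := by
  have h₀ := supportLine_le_supportApprox hsupp (n := n) (j := n * (n + 1)) (by nlinarith) x
  rw [grid_mul_add_one] at h₀
  have h₁ := supportApprox_le hsupp n x
  rw [abs_le]
  constructor <;> linarith [abs_nonneg (f x), abs_nonneg (supportLine f g 0 x),
    neg_abs_le (supportLine f g 0 x), le_abs_self (f x)]

lemma tendsto_supportApprox (hsupp : ∀ t x, supportLine f g t x ≤ f x) (x : ℝ) :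
    Tendsto (fun n => supportApprox f g n x) atTop (𝓝 (f x)) := by
  have hlow : Tendsto (fun n : ℕ => f x - (g x - g (x - 1)) * (1 / ((n : ℝ) + 1))) atTop
      (𝓝 (f x)) := by
    simpa using (tendsto_one_div_add_atTop_nhds_zero_nat.const_mul (g x - g (x - 1))).const_sub
      (f x)
  refine tendsto_of_tendsto_of_tendsto_of_le_of_le' hlow tendsto_const_nhds ?_
    (Eventually.of_forall (supportApprox_le hsupp · x))
  filter_upwards [eventually_ge_atTop ⌈|x|⌉₊] with n hn
  obtain ⟨j, hj, htx, hxt⟩ := exists_grid_near (Nat.ceil_le.1 hn)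
  have hδ : 1 / ((n : ℝ) + 1) ≤ 1 := by
    rw [div_le_one (by positivity)]
    linarith [n.cast_nonneg (α := ℝ)]
  exact (sub_mul_le_supportLine hsupp htx hxt hδ).trans (supportLine_le_supportApprox hsupp hj x)

lemma integrable_supportApprox {μ : Measure ℝ} [IsFiniteMeasure μ]
    (hμ : Integrable (fun x => x) μ) (n : ℕ) : Integrable (supportApprox f g n) μ :=
  integrable_envelopeSum hμ (fun _ => supportLine_eq_add_mul _) _

lemma tendsto_integral_supportApprox (hsupp : ∀ t x, supportLine f g t x ≤ f x)
    {μ : Measure ℝ} [IsFiniteMeasure μ] (hμ : Integrable (fun x => x) μ) (hf : Integrable f μ) :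
    Tendsto (fun n => ∫ x, supportApprox f g n x ∂μ) atTop (𝓝 (∫ x, f x ∂μ)) := by
  have hline : Integrable (supportLine f g 0) μ :=
    (integrable_affine hμ _ _).congr (ae_of_all _ fun x => (supportLine_eq_add_mul 0 x).symm)
  exact tendsto_integral_of_dominated_convergence (fun x => |f x| + |supportLine f g 0 x|)
    (fun n => (integrable_supportApprox hμ n).aestronglyMeasurable) (hf.abs.add hline.abs)
    (fun n => ae_of_all _ (abs_supportApprox_le hsupp n))
    (ae_of_all _ (tendsto_supportApprox hsupp))

end SupportApprox

theorem stmt7 (eta chi : Measure ℝ) [IsFiniteMeasure eta] [IsFiniteMeasure chi]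
    (hinte : Integrable (fun x => x) eta) (hintc : Integrable (fun x => x) chi)
    (hmass : eta Set.univ = chi Set.univ)
    (hmean : ∫ x, x ∂eta = ∫ x, x ∂chi) :
    Cx eta chi ↔ ∀ k, pot eta k ≤ pot chi k := by
  refine ⟨fun hcx k => hcx _ ?_ (integrable_max_const_sub_zero hinte k)
    (integrable_max_const_sub_zero hintc k), fun hpot f hf hfe hfc => ?_⟩
  · exact ((convexOn_const k convex_univ).sub (concaveOn_id convex_univ)).sup
      (convexOn_const 0 convex_univ)
  have hmass' : eta.real univ = chi.real univ := by simp only [measureReal_def, hmass]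
  have hcpot : ∀ k, cpot eta k ≤ cpot chi k := fun k => by
    rw [cpot_eq_integral_sub_add_pot hinte, cpot_eq_integral_sub_add_pot hintc, hmean, hmass']
    linarith [hpot k]
  have hsupp : ∀ t x, supportLine f (fun t => derivWithin f (Ioi t) t) t x ≤ f x :=
    fun t x => hf.add_rightDeriv_mul_sub_le (by simp) (mem_univ x)
  exact le_of_tendsto_of_tendsto' (tendsto_integral_supportApprox hsupp hinte hfe)
    (tendsto_integral_supportApprox hsupp hintc hfc) fun n =>
      integral_envelopeSum_le hinte hintc hmass' hmean hcpot
        (fun _ _ hij => monotone_of_supportLine_le hsupp (grid_mono n hij))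
        (fun _ => supportLine_eq_add_mul _) _
end

section
/- If η, χ are finite measures on ℝ with finite first moments, equal total mass, and η ≤_E χ (∫f dη ≤ ∫f dχ for all nonnegative convex f), then η ≤_cx χ (∫f dη ≤ ∫f dχ for all convex f). -/
open MeasureTheory Set Filter

/-!
Truncating a convex `f` from below at a level `k` gives the convex function `max f k`, and
`max f k - k` is convex and nonnegative. Since `η` and `χ` have the same mass, `η ≤_E χ` therefore
yields `∫ max f k dη ≤ ∫ max f k dχ` for every `k`, and letting `k → -∞` (dominated by `|f|`)
gives `∫ f dη ≤ ∫ f dχ`.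
-/

theorem integral_max_const_eq {μ : Measure ℝ} [IsFiniteMeasure μ] {f : ℝ → ℝ}
    (hf : Integrable f μ) (k : ℝ) :
    ∫ x, max (f x) k ∂μ = ∫ x, max (f x - k) 0 ∂μ + μ.real univ * k := by
  have hpt : ∀ x, max (f x) k = max (f x - k) 0 + k := fun x => by
    rw [← max_add_add_right]; simp
  have hg : Integrable (fun x => max (f x - k) 0) μ := (hf.sub (integrable_const k)).pos_part
  simp_rw [hpt]
  rw [integral_add hg (integrable_const k), integral_const, smul_eq_mul]

namespace ECx

variable {eta chi : Measure ℝ}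

theorem integral_le_of_nonneg (hE : ECx eta chi) {f : ℝ → ℝ} (hf : ConvexOn ℝ univ f)
    (hf₀ : ∀ x, 0 ≤ f x) (hfχ : Integrable f chi) :
    ∫ x, f x ∂eta ≤ ∫ x, f x ∂chi := by
  have hfm : AEStronglyMeasurable f eta :=
    (continuousOn_univ.mp (hf.continuousOn isOpen_univ)).aestronglyMeasurable
  rw [integral_eq_lintegral_of_nonneg_ae (ae_of_all _ hf₀) hfm,
    integral_eq_lintegral_of_nonneg_ae (ae_of_all _ hf₀) hfχ.1]
  exact ENNReal.toReal_mono hfχ.lintegral_lt_top.ne (hE f hf hf₀)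

theorem integral_max_le [IsFiniteMeasure eta] [IsFiniteMeasure chi] (hE : ECx eta chi)
    (hmass : eta univ = chi univ) {f : ℝ → ℝ} (hf : ConvexOn ℝ univ f)
    (hfη : Integrable f eta) (hfχ : Integrable f chi) (k : ℝ) :
    ∫ x, max (f x) k ∂eta ≤ ∫ x, max (f x) k ∂chi := by
  have hg : ConvexOn ℝ univ fun x => max (f x - k) 0 :=
    (hf.sub (concaveOn_const k convex_univ)).sup (convexOn_const 0 convex_univ)
  rw [integral_max_const_eq hfη, integral_max_const_eq hfχ, measureReal_def, measureReal_def,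
    hmass]
  exact add_le_add_left (hE.integral_le_of_nonneg hg (fun _ => le_max_right _ _)
    (hfχ.sub (integrable_const k)).pos_part) _

end ECx

theorem tendsto_integral_max_atBot {μ : Measure ℝ} [IsFiniteMeasure μ] {f : ℝ → ℝ}
    (hf : Integrable f μ) :
    Tendsto (fun k => ∫ x, max (f x) k ∂μ) atBot (nhds (∫ x, f x ∂μ)) := by
  refine tendsto_integral_filter_of_dominated_convergence (fun x => |f x|)
    (Eventually.of_forall fun k => (hf.sup (integrable_const k)).1) ?_ hf.abs
    (ae_of_all _ fun x => ?_)
  · filter_upwards [eventually_le_atBot 0] with k hk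
    refine ae_of_all _ fun x => abs_le.2 ⟨?_, max_le (le_abs_self _) (hk.trans (abs_nonneg _))⟩
    exact (neg_abs_le _).trans (le_max_left _ _)
  · refine tendsto_const_nhds.congr' ?_
    filter_upwards [eventually_le_atBot (f x)] with k hk
    exact (max_eq_left hk).symm

theorem stmt8_general (eta chi : Measure ℝ) [IsFiniteMeasure eta] [IsFiniteMeasure chi]
    (hmass : eta Set.univ = chi Set.univ)
    (hE : ECx eta chi) :
    Cx eta chi := fun _ hf hfη hfχ =>
  le_of_tendsto_of_tendsto' (tendsto_integral_max_atBot hfη) (tendsto_integral_max_atBot hfχ)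
    (hE.integral_max_le hmass hf hfη hfχ)

theorem stmt8 (eta chi : Measure ℝ) [IsFiniteMeasure eta] [IsFiniteMeasure chi]
    (hinte : Integrable (fun x => x) eta) (hintc : Integrable (fun x => x) chi)
    (hmass : eta Set.univ = chi Set.univ)
    (hE : ECx eta chi) :
    Cx eta chi :=
  stmt8_general eta chi hmass hE
end
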